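/- arXiv:math/0410046 — 2 statements merged into one kernel-verified Lean document; each statement's English description precedes it below -/
import Mathlib

section
/- Division modulo Q (commutative case of Proposition 3.5). Let P_1,…,P_r ∈ R_C \ R(Q), let ℕ^{n+q} = Δ_1 ∪ ⋯ ∪ Δ_r ∪ Δ̄ be the partition associated with the exponents exp^modQ_≺(P_1),…,exp^modQ_≺(P_r), and set h = ∏_{j=1}^r cp^modQ_≺(P_j) ∈ C \ Q. Then for every P ∈ R_C there exist Q_1,…,Q_r, R, T ∈ R_F such that: (a) P = Σ_j Q_j P_j + R + T; (b) all coefficients of the Q_j, of R and of T lie in the localization C[h^{-1}] ⊆ F; (c) all coefficients of T lie in the ideal Q·C[h^{-1}] generated by Q in C[h^{-1}]; (d) for each j, Q_j = 0 or DN(Q_j) + exp^modQ_≺(P_j) ⊆ Δ_j; (e) R = 0 or DN(R) ⊆ Δ̄. Moreover the tuple (Q_1,…,Q_r,R) is unique modulo elements all of whose coefficients lie in Q·C[h^{-1}]; equivalently, the specializations (Q_1)_Q,…,(Q_r)_Q,(R)_Q ∈ R_{F(Q)} (which are defined since h ∉ Q) are uniquely determined by P. -/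
/-
Division modulo Q (commutative case of Proposition 3.5).
-/

open Classical

noncomputable section

/-- Exponents in ℕ^{n+q}, written as pairs (α, β) ∈ ℕ^n × ℕ^q. -/
abbrev Expo (n q : ℕ) := (Fin n →₀ ℕ) × (Fin q →₀ ℕ)

/-- The ring R_A = A[[x]][z], polynomials in z = (z_1,…,z_q) over A[[x]]. -/
abbrev Rxz (n q : ℕ) (A : Type) [CommRing A] :=
  MvPolynomial (Fin q) (MvPowerSeries (Fin n) A)

/-- Coefficient c_{α,β} of `P` at the pair exponent `d = (α, β)`. -/
def coeffOf {n q : ℕ} {A : Type} [CommRing A] (P : Rxz n q A) (d : Expo n q) : A :=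
  MvPowerSeries.coeff (R := A) d.1 (MvPolynomial.coeff d.2 P)

/-- Newton diagram DN(P). -/
def newtonDiag {n q : ℕ} {A : Type} [CommRing A] (P : Rxz n q A) : Set (Expo n q) :=
  {d | coeffOf P d ≠ 0}

/-- The linear form L(β) = Σ l_i β_i. -/
def Lform {q : ℕ} (l : Fin q → ℕ) (β : Fin q →₀ ℕ) : ℕ := ∑ i, l i * β i

/-- Total degree |β| of a finitely supported exponent. -/
def degSum {σ : Type} [Fintype σ] (β : σ →₀ ℕ) : ℕ := ∑ i, β i

/-- The order ≺_L built from the linear form given by `l` and the tie-breaking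
monomial order `lt0` (where `lt0 d' d` means `d >₀ d'`). -/
def PrecL {n q : ℕ} (l : Fin q → ℕ) (lt0 : Expo n q → Expo n q → Prop)
    (d d' : Expo n q) : Prop :=
  Lform l d.2 < Lform l d'.2 ∨
    (Lform l d.2 = Lform l d'.2 ∧
      (degSum d.2 < degSum d'.2 ∨
        (degSum d.2 = degSum d'.2 ∧
          (degSum d'.1 < degSum d.1 ∨
            (degSum d.1 = degSum d'.1 ∧ lt0 d' d)))))

/-- `e` is the privileged exponent exp_≺(P): the `prec`-maximum of the Newton diagram of `P`. -/
def IsPrivExp {n q : ℕ} {A : Type} [CommRing A] (prec : Expo n q → Expo n q → Prop)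
    (P : Rxz n q A) (e : Expo n q) : Prop :=
  coeffOf P e ≠ 0 ∧ ∀ d, coeffOf P d ≠ 0 → d = e ∨ prec d e

/-- `v ∈ e + ℕ^{n+q}`. -/
def inShift {n q : ℕ} (e v : Expo n q) : Prop := ∃ γ : Expo n q, v = e + γ

/-- Specialization (·)_P at a prime ideal P of C: apply coefficientwise the natural
map C → C/P → F(P) = Frac(C/P). -/
def specHom {n q : ℕ} {C : Type} [CommRing C] (P : Ideal C) :
    Rxz n q C →+* Rxz n q (FractionRing (C ⧸ P)) :=
  MvPolynomial.map (MvPowerSeries.map (σ := Fin n)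
    ((algebraMap (C ⧸ P) (FractionRing (C ⧸ P))).comp (Ideal.Quotient.mk P)))

/-- Membership in R(Q): all the coefficients of P lie in Q. -/
def allCoeffIn {n q : ℕ} {C : Type} [CommRing C] (Q : Ideal C) (P : Rxz n q C) : Prop :=
  ∀ d, coeffOf P d ∈ Q

/-- The set Exp^modQ_≺(J) = { exp_≺((P)_Q) : P ∈ J \ R(Q) }. -/
def expModQSet {n q : ℕ} {C : Type} [CommRing C]
    (l : Fin q → ℕ) (lt0 : Expo n q → Expo n q → Prop)
    (Q : Ideal C) (J : Ideal (Rxz n q C)) : Set (Expo n q) :=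
  {d | ∃ P ∈ J, ¬ allCoeffIn Q P ∧ IsPrivExp (PrecL l lt0) (specHom Q P) d}

/-- The region Δ_j of the partition of ℕ^{n+q} associated to the exponents e_1,…,e_r:
Δ_j = (e_j + ℕ^{n+q}) \ (Δ_1 ∪ ⋯ ∪ Δ_{j-1}). -/
def DeltaJ {n q r : ℕ} (e : Fin r → Expo n q) (j : Fin r) : Set (Expo n q) :=
  {v | inShift (e j) v ∧ ∀ k, k < j → ¬ inShift (e k) v}

/-- The residual region Δ̄ (complement of the union of the Δ_j). -/
def DeltaBar {n q r : ℕ} (e : Fin r → Expo n q) : Set (Expo n q) :=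
  {v | ∀ j, ¬ inShift (e j) v}

/-- The inclusion R_C → R_F, F = Frac C, applied coefficientwise. -/
def toFracHom {n q : ℕ} {C : Type} [CommRing C] :
    Rxz n q C →+* Rxz n q (FractionRing C) :=
  MvPolynomial.map (MvPowerSeries.map (σ := Fin n) (algebraMap C (FractionRing C)))

/-- `a ∈ F = Frac C` lies in the localization C[h⁻¹] ⊆ F. -/
def inLoc {C : Type} [CommRing C] (h : C) (a : FractionRing C) : Prop :=
  ∃ (c : C) (m : ℕ),
    a * (algebraMap C (FractionRing C) h) ^ m = algebraMap C (FractionRing C) c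

/-- `a ∈ F = Frac C` lies in the ideal Q·C[h⁻¹] of the localization C[h⁻¹]. -/
def inLocIdeal {C : Type} [CommRing C] (h : C) (Q : Ideal C) (a : FractionRing C) : Prop :=
  ∃ c ∈ Q, ∃ m : ℕ,
    a * (algebraMap C (FractionRing C) h) ^ m = algebraMap C (FractionRing C) c

/-- The conditions (a)–(e) on the quotients `Qs`, the remainder `R` and the error
term `T` in the division modulo Q of `F` by `P_1, …, P_r` (with mod-Q privileged
exponents `e_1, …, e_r` and `h` the product of the mod-Q privileged coefficients). -/
def IsDivModQ {n q r : ℕ} {C : Type} [CommRing C]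
    (Q : Ideal C) (h : C) (P : Fin r → Rxz n q C) (e : Fin r → Expo n q)
    (F : Rxz n q C)
    (Qs : Fin r → Rxz n q (FractionRing C)) (R T : Rxz n q (FractionRing C)) : Prop :=
  (toFracHom F = ∑ j, Qs j * toFracHom (P j) + R + T) ∧
  (∀ j d, inLoc h (coeffOf (Qs j) d)) ∧
  (∀ d, inLoc h (coeffOf R d)) ∧
  (∀ d, inLoc h (coeffOf T d)) ∧
  (∀ d, inLocIdeal h Q (coeffOf T d)) ∧
  (∀ j, Qs j = 0 ∨ ∀ d ∈ newtonDiag (Qs j), d + e j ∈ DeltaJ e j) ∧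
  (R = 0 ∨ newtonDiag R ⊆ DeltaBar e)

/-!
Over any commutative ring, `F ∈ A[[x]][z]` can be divided by `P_1, …, P_r` whose `≺`-privileged
coefficients are units: the coefficients of the quotients and of the remainder are determined
one exponent at a time, each from `F` and from coefficients at `≺`-larger exponents. This
recursion is well founded because for the weight `|β| + M·L(β)`, with `M` above the z-degrees
of the `P_j`, no term of `P_j` below its privileged exponent is heavier than that exponent; so
everything happens in a region of bounded weight, where `≺` has no infinite ascending chain.

Modulo `Q` the privileged coefficients `c_j` survive, so `h = ∏ c_j ∉ Q` is invertible in
`C[h⁻¹]`. Dividing `F` there by the truncations of the `P_j` to their terms `⪯ e_j` gives the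
`Q_j` and `R`; the discarded terms lie in `Q`, hence so do the coefficients of
`T = ∑ Q_j (truncation of P_j - P_j)`. Uniqueness runs the same recursion on the difference of
two divisions: at each exponent `c_j` times the new coefficient lies in `Q·C[h⁻¹]` by induction,
and `c_j` can be cancelled because it divides `h`.
-/

open Finset

instance Prod.instHasAntidiagonal {A B : Type*} [AddMonoid A] [AddMonoid B]
    [HasAntidiagonal A] [HasAntidiagonal B] : HasAntidiagonal (A × B) where
  antidiagonal v :=
    (antidiagonal v.1 ×ˢ antidiagonal v.2).map (Equiv.prodProdProdComm A A B B).toEmbedding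
  mem_antidiagonal {v x} := by
    simp [HasAntidiagonal.mem_antidiagonal, Prod.ext_iff]

lemma Prod.sum_antidiagonal {A B M : Type*} [AddMonoid A] [AddMonoid B] [HasAntidiagonal A]
    [HasAntidiagonal B] [AddCommMonoid M] (f : (A × B) × (A × B) → M) (v : A × B) :
    ∑ x ∈ antidiagonal v, f x =
      ∑ a ∈ antidiagonal v.1, ∑ b ∈ antidiagonal v.2, f ((a.1, b.1), (a.2, b.2)) := by
  rw [← Finset.sum_product']
  exact Finset.sum_map _ _ _

lemma WellFounded.exists_fixpoint {α β : Type*} [Nonempty β] {r : α → α → Prop}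
    (hr : WellFounded r) (Φ : (α → β) → α → β)
    (hΦ : ∀ f g x, (∀ y, r y x → f y = g y) → Φ f x = Φ g x) : ∃ f, ∀ x, f x = Φ f x := by
  classical
  refine ⟨hr.fix fun x rec => Φ (fun y => if h : r y x then rec y h else Classical.arbitrary β) x,
    fun x => ?_⟩
  rw [hr.fix_eq]
  exact hΦ _ _ _ fun y hy => dif_pos hy

section Antidiagonal
variable {A M : Type*} [AddCommMonoid A] [HasAntidiagonal A] [DecidableEq A] [AddCommMonoid M]

lemma sum_antidiagonal_ite_snd_eq [IsLeftCancelAdd A] (f : A × A → M) (e γ : A) :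
    ∑ x ∈ antidiagonal (e + γ), (if x.2 = e then f x else 0) = f (γ, e) := by
  rw [Finset.sum_eq_single_of_mem (γ, e) (by simp [add_comm]) fun x hx hne => ?_, if_pos rfl]
  rw [HasAntidiagonal.mem_antidiagonal] at hx
  refine if_neg fun he => hne (Prod.ext ?_ he)
  rw [he, add_comm] at hx
  exact add_left_cancel hx

lemma sum_antidiagonal_ite_snd_eq_of_forall_ne (f : A × A → M) {e v : A}
    (hv : ∀ γ, v ≠ e + γ) : ∑ x ∈ antidiagonal v, (if x.2 = e then f x else 0) = 0 := by
  refine Finset.sum_eq_zero fun x hx => if_neg fun he => hv x.1 ?_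
  rw [HasAntidiagonal.mem_antidiagonal] at hx
  rw [← hx, he, add_comm]

end Antidiagonal

section Coefficients
variable {n q : ℕ} {A B : Type} [CommRing A] [CommRing B]

def mapRxz (φ : A →+* B) : Rxz n q A →+* Rxz n q B :=
  MvPolynomial.map (MvPowerSeries.map φ)

@[simp] lemma coeffOf_mapRxz (φ : A →+* B) (P : Rxz n q A) (d : Expo n q) :
    coeffOf (mapRxz φ P) d = φ (coeffOf P d) := by
  simp [mapRxz, coeffOf, MvPolynomial.coeff_map, MvPowerSeries.coeff_map]

@[simp] lemma coeffOf_zero (d : Expo n q) : coeffOf (0 : Rxz n q A) d = 0 := by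
  simp [coeffOf]

@[simp] lemma coeffOf_add (P P' : Rxz n q A) (d : Expo n q) :
    coeffOf (P + P') d = coeffOf P d + coeffOf P' d := by
  simp [coeffOf]

@[simp] lemma coeffOf_sub (P P' : Rxz n q A) (d : Expo n q) :
    coeffOf (P - P') d = coeffOf P d - coeffOf P' d := by
  simp [coeffOf]

@[simp] lemma coeffOf_sum {ι : Type*} (s : Finset ι) (P : ι → Rxz n q A) (d : Expo n q) :
    coeffOf (∑ i ∈ s, P i) d = ∑ i ∈ s, coeffOf (P i) d := by
  simp [coeffOf, MvPolynomial.coeff_sum]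

lemma coeffOf_mul (P P' : Rxz n q A) (d : Expo n q) :
    coeffOf (P * P') d = ∑ x ∈ antidiagonal d, coeffOf P x.1 * coeffOf P' x.2 := by
  simp only [coeffOf, MvPolynomial.coeff_mul, map_sum, MvPowerSeries.coeff_mul]
  rw [Prod.sum_antidiagonal]
  exact Finset.sum_comm

lemma coeffOf_sum_mul {r : ℕ} (Z P : Fin r → Rxz n q A) (d : Expo n q) :
    coeffOf (∑ j, Z j * P j) d =
      ∑ j, ∑ x ∈ antidiagonal d, coeffOf (Z j) x.1 * coeffOf (P j) x.2 := by
  simp only [coeffOf_sum, coeffOf_mul]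

lemma Rxz.ext {P P' : Rxz n q A} (h : ∀ d, coeffOf P d = coeffOf P' d) : P = P' :=
  MvPolynomial.ext _ _ fun β => MvPowerSeries.ext fun α => h (α, β)

lemma mem_support_of_mem_newtonDiag {P : Rxz n q A} {d : Expo n q} (hd : d ∈ newtonDiag P) :
    d.2 ∈ P.support := by
  rw [MvPolynomial.mem_support_iff]
  intro h0
  exact hd (by simp [coeffOf, h0])

lemma exists_coeffOf_eq (g : Expo n q → A) {s : Set (Fin q →₀ ℕ)} (hs : s.Finite)
    (hg : ∀ d, g d ≠ 0 → d.2 ∈ s) : ∃ P : Rxz n q A, ∀ d, coeffOf P d = g d := by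
  refine ⟨AddMonoidAlgebra.ofCoeff <|
    Finsupp.onFinset hs.toFinset (fun β α => g (α, β)) fun β hβ => ?_, fun d => rfl⟩
  obtain ⟨α, hα⟩ := Function.ne_iff.mp hβ
  exact hs.mem_toFinset.mpr (hg (α, β) hα)

end Coefficients

section Order
variable {n q : ℕ} (l : Fin q → ℕ) (lt0 : Expo n q → Expo n q → Prop)

lemma Lform_add (β β' : Fin q →₀ ℕ) : Lform l (β + β') = Lform l β + Lform l β' := by
  simp [Lform, mul_add, Finset.sum_add_distrib]

lemma degSum_add {σ : Type} [Fintype σ] (β β' : σ →₀ ℕ) :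
    degSum (β + β') = degSum β + degSum β' := by
  simp [degSum, Finset.sum_add_distrib]

variable {l lt0} in
lemma precL_add_right (hadd : ∀ a b c : Expo n q, lt0 a b → lt0 (a + c) (b + c))
    {d d' : Expo n q} (h : PrecL l lt0 d d') (c : Expo n q) :
    PrecL l lt0 (d + c) (d' + c) := by
  simp only [PrecL, Prod.fst_add, Prod.snd_add, Lform_add, degSum_add]
  rcases h with h | ⟨h1, h | ⟨h2, h | ⟨h3, h4⟩⟩⟩
  · omega
  · omega
  · omega
  · exact Or.inr ⟨by omega, Or.inr ⟨by omega, Or.inr ⟨by omega, hadd _ _ _ h4⟩⟩⟩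

def zWeight (M : ℕ) (β : Fin q →₀ ℕ) : ℕ := degSum β + M * Lform l β

lemma zWeight_add (M : ℕ) (β β' : Fin q →₀ ℕ) :
    zWeight l M (β + β') = zWeight l M β + zWeight l M β' := by
  simp only [zWeight, Lform_add, degSum_add]
  ring

lemma degSum_le_zWeight (M : ℕ) (β : Fin q →₀ ℕ) : degSum β ≤ zWeight l M β :=
  Nat.le_add_right _ _

variable {l lt0} in
lemma zWeight_le_of_precL {M : ℕ} {d d' : Expo n q} (hd : degSum d.2 < M)
    (h : PrecL l lt0 d d') : zWeight l M d.2 ≤ zWeight l M d'.2 := by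
  unfold zWeight
  rcases h with h | ⟨h1, h | ⟨h2, -⟩⟩
  · nlinarith
  · rw [h1]; omega
  · rw [h1, h2]

lemma wellFounded_bounded_flip_precL {M : ℕ} (hM : 0 < M) (hwf : WellFounded lt0) (B : ℕ) :
    WellFounded fun w v : Expo n q => zWeight l M w.2 ≤ B ∧ PrecL l lt0 v w := by
  have hlex := WellFounded.prod_lex (ra := (· < · : ℕ → ℕ → Prop)) wellFounded_lt <|
    WellFounded.prod_lex (ra := (· < · : ℕ → ℕ → Prop)) wellFounded_lt <|
      WellFounded.prod_lex (ra := (· < · : ℕ → ℕ → Prop)) wellFounded_lt hwf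
  refine Subrelation.wf ?_ (InvImage.wf
    (fun v : Expo n q => (B - Lform l v.2, B - degSum v.2, degSum v.1, v)) hlex)
  rintro w v ⟨hw, h | ⟨h1, h | ⟨h2, h | ⟨h3, h4⟩⟩⟩⟩
  all_goals have hL : Lform l w.2 ≤ B := by unfold zWeight at hw; nlinarith
  all_goals have hD : degSum w.2 ≤ B := by unfold zWeight at hw; omega
  all_goals dsimp only [InvImage]
  · exact Prod.Lex.left _ _ (by omega)
  · rw [h1]; exact Prod.Lex.right _ (Prod.Lex.left _ _ (by omega))
  · rw [h1, h2]; exact Prod.Lex.right _ (Prod.Lex.right _ (Prod.Lex.left _ _ h))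
  · rw [h1, h2, h3]; exact Prod.Lex.right _ (Prod.Lex.right _ (Prod.Lex.right _ h4))

end Order

section Partition
variable {n q r : ℕ} (e : Fin r → Expo n q) {v : Expo n q}

lemma eq_of_mem_deltaJ {j k : Fin r} (hj : v ∈ DeltaJ e j) (hk : v ∈ DeltaJ e k) : j = k := by
  rcases lt_trichotomy j k with h | h | h
  · exact absurd hj.1 (hk.2 j h)
  · exact h
  · exact absurd hk.1 (hj.2 k h)

lemma not_mem_deltaBar_of_mem_deltaJ {j : Fin r} (hj : v ∈ DeltaJ e j) : v ∉ DeltaBar e :=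
  fun hv => hv j hj.1

lemma exists_mem_deltaJ_of_not_mem_deltaBar (hv : v ∉ DeltaBar e) : ∃ j, v ∈ DeltaJ e j := by
  obtain ⟨j, hj, hmin⟩ :=
    wellFounded_lt.has_min {j | inShift (e j) v} (_root_.not_forall_not.mp hv)
  exact ⟨j, hj, fun k hk hkv => hmin k hkv hk⟩

end Partition

section LeadTerms
variable {n q r : ℕ} {K : Type} [CommRing K] (e : Fin r → Expo n q)
  (a Z : Fin r → Expo n q → K)

def leadTerms (v : Expo n q) : K :=
  ∑ j, ∑ x ∈ antidiagonal v, if x.2 = e j then Z j x.1 * a j x.2 else 0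

def tailTerms (v : Expo n q) : K :=
  ∑ j, ∑ x ∈ antidiagonal v, if x.2 = e j then 0 else Z j x.1 * a j x.2

lemma leadTerms_add_tailTerms (v : Expo n q) :
    leadTerms e a Z v + tailTerms e a Z v = ∑ j, ∑ x ∈ antidiagonal v, Z j x.1 * a j x.2 := by
  simp only [leadTerms, tailTerms, ← Finset.sum_add_distrib]
  refine Finset.sum_congr rfl fun j _ => Finset.sum_congr rfl fun x _ => ?_
  split_ifs <;> simp

variable {e a Z}

lemma leadTerms_of_mem_deltaJ (hZ : ∀ j γ, e j + γ ∉ DeltaJ e j → Z j γ = 0) {j : Fin r}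
    {γ : Expo n q} (h : e j + γ ∈ DeltaJ e j) :
    leadTerms e a Z (e j + γ) = Z j γ * a j (e j) := by
  rw [leadTerms, Finset.sum_eq_single_of_mem j (Finset.mem_univ j)]
  · exact sum_antidiagonal_ite_snd_eq (fun x => Z j x.1 * a j x.2) (e j) γ
  intro k _ hkj
  by_cases hk : inShift (e k) (e j + γ)
  · obtain ⟨γ', hγ'⟩ := hk
    rw [hγ', sum_antidiagonal_ite_snd_eq (fun x => Z k x.1 * a k x.2),
      hZ k γ' fun hk' => hkj (eq_of_mem_deltaJ e hk' (hγ' ▸ h)), zero_mul]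
  · exact sum_antidiagonal_ite_snd_eq_of_forall_ne _ fun γ' hγ' => hk ⟨γ', hγ'⟩

lemma leadTerms_of_mem_deltaBar {v : Expo n q} (h : v ∈ DeltaBar e) : leadTerms e a Z v = 0 :=
  Finset.sum_eq_zero fun k _ =>
    sum_antidiagonal_ite_snd_eq_of_forall_ne _ fun γ hγ => h k ⟨γ, hγ⟩

end LeadTerms

section Existence
variable {n q r : ℕ} {l : Fin q → ℕ} {lt0 : Expo n q → Expo n q → Prop} {A : Type} [CommRing A]
  (e : Fin r → Expo n q)

/- A single function `D` on `ℕ^{n+q}` encodes all the quotients and the remainder: `Q_j` has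
coefficient `D (e j + γ)` at `γ` and `R` has coefficient `D v` at `v`, which is unambiguous
because the `Δ_j` and `Δ̄` partition `ℕ^{n+q}`. Everything is cut off outside a region `Ω`
on which the recursion defining `D` is well founded. -/

def quotCoeff (Ω : Set (Expo n q)) (D : Expo n q → A) (j : Fin r) (γ : Expo n q) : A :=
  if e j + γ ∈ DeltaJ e j ∩ Ω then D (e j + γ) else 0

def remCoeff (Ω : Set (Expo n q)) (D : Expo n q → A) (v : Expo n q) : A :=
  if v ∈ DeltaBar e ∩ Ω then D v else 0

def pivot (a : Fin r → Expo n q → A) (v : Expo n q) : A :=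
  if h : ∃ j, v ∈ DeltaJ e j then a h.choose (e h.choose) else 1

variable {e}

lemma pivot_of_mem_deltaJ (a : Fin r → Expo n q → A) {v : Expo n q} {j : Fin r}
    (h : v ∈ DeltaJ e j) : pivot e a v = a j (e j) := by
  have hex : ∃ j, v ∈ DeltaJ e j := ⟨j, h⟩
  rw [pivot, dif_pos hex, eq_of_mem_deltaJ e hex.choose_spec h]

lemma pivot_of_mem_deltaBar (a : Fin r → Expo n q → A) {v : Expo n q} (h : v ∈ DeltaBar e) :
    pivot e a v = 1 :=
  dif_neg fun ⟨_, hj⟩ => not_mem_deltaBar_of_mem_deltaJ e hj h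

variable {a : Fin r → Expo n q → A} {Ω : Set (Expo n q)}

lemma mem_of_quotCoeff_ne_zero {D : Expo n q → A} {j : Fin r} {γ : Expo n q}
    (h : quotCoeff e Ω D j γ ≠ 0) : e j + γ ∈ DeltaJ e j ∩ Ω :=
  of_not_not fun h' => h (if_neg h')

lemma mem_of_remCoeff_ne_zero {D : Expo n q → A} {v : Expo n q} (h : remCoeff e Ω D v ≠ 0) :
    v ∈ DeltaBar e ∩ Ω :=
  of_not_not fun h' => h (if_neg h')

lemma exists_divisionCoeff (hadd : ∀ a b c : Expo n q, lt0 a b → lt0 (a + c) (b + c))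
    (hΩ : WellFounded fun w v => w ∈ Ω ∧ PrecL l lt0 v w)
    (ha : ∀ j δ, a j δ ≠ 0 → δ = e j ∨ PrecL l lt0 δ (e j)) (f : Expo n q → A) :
    ∃ D : Expo n q → A,
      ∀ v, D v = Ring.inverse (pivot e a v) * (f v - tailTerms e a (quotCoeff e Ω D) v) := by
  refine hΩ.exists_fixpoint _ fun D D' v hDD' => ?_
  congr 2
  refine Finset.sum_congr rfl fun j _ => Finset.sum_congr rfl fun x hx => ?_
  by_cases hxe : x.2 = e j
  · simp only [hxe, if_true]
  simp only [hxe, if_false]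
  by_cases ha0 : a j x.2 = 0
  · simp only [ha0, mul_zero]
  have hprec := precL_add_right hadd ((ha j x.2 ha0).resolve_left hxe) x.1
  rw [add_comm, HasAntidiagonal.mem_antidiagonal.mp hx] at hprec
  unfold quotCoeff
  split_ifs with hw
  · rw [hDD' _ ⟨hw.2, hprec⟩]
  · rfl

lemma quotCoeff_mul_eq_zero_of_not_mem
    (ha : ∀ j δ, a j δ ≠ 0 → δ = e j ∨ PrecL l lt0 δ (e j))
    (hΩ : ∀ j (x : Expo n q × Expo n q), a j x.2 ≠ 0 → PrecL l lt0 x.2 (e j) →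
      x.1 + x.2 ∉ Ω → e j + x.1 ∉ Ω)
    (D : Expo n q → A) {v : Expo n q} (hv : v ∉ Ω) (j : Fin r) {x : Expo n q × Expo n q}
    (hx : x ∈ antidiagonal v) : quotCoeff e Ω D j x.1 * a j x.2 = 0 := by
  rw [HasAntidiagonal.mem_antidiagonal] at hx
  by_cases ha0 : a j x.2 = 0
  · rw [ha0, mul_zero]
  have hout : e j + x.1 ∉ Ω := by
    rcases ha j x.2 ha0 with hxe | hprec
    · rwa [← hxe, add_comm, hx]
    · exact hΩ j x ha0 hprec (hx ▸ hv)
  rw [quotCoeff, if_neg fun h => hout h.2, zero_mul]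

lemma divisionCoeff_spec (ha : ∀ j δ, a j δ ≠ 0 → δ = e j ∨ PrecL l lt0 δ (e j))
    (hunit : ∀ j, IsUnit (a j (e j)))
    (hΩ : ∀ j (x : Expo n q × Expo n q), a j x.2 ≠ 0 → PrecL l lt0 x.2 (e j) →
      x.1 + x.2 ∉ Ω → e j + x.1 ∉ Ω)
    {f : Expo n q → A} (hf : ∀ v ∉ Ω, f v = 0) {D : Expo n q → A}
    (hD : ∀ v, D v = Ring.inverse (pivot e a v) * (f v - tailTerms e a (quotCoeff e Ω D) v))
    (v : Expo n q) :
    leadTerms e a (quotCoeff e Ω D) v + tailTerms e a (quotCoeff e Ω D) v + remCoeff e Ω D v =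
      f v := by
  by_cases hv : v ∉ Ω
  · rw [leadTerms_add_tailTerms, remCoeff, if_neg fun h => hv h.2, hf v hv, add_zero]
    exact Finset.sum_eq_zero fun j _ => Finset.sum_eq_zero fun x hx =>
      quotCoeff_mul_eq_zero_of_not_mem ha hΩ D hv j hx
  rw [not_not] at hv
  by_cases hbar : v ∈ DeltaBar e
  · rw [leadTerms_of_mem_deltaBar hbar, remCoeff, if_pos ⟨hbar, hv⟩, hD v,
      pivot_of_mem_deltaBar a hbar, Ring.inverse_one]
    ring
  obtain ⟨j, hj⟩ := exists_mem_deltaJ_of_not_mem_deltaBar e hbar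
  obtain ⟨γ, rfl⟩ := hj.1
  have hZ : ∀ k γ', e k + γ' ∉ DeltaJ e k → quotCoeff e Ω D k γ' = 0 :=
    fun k γ' h => if_neg fun h' => h h'.1
  rw [leadTerms_of_mem_deltaJ hZ hj, remCoeff, if_neg fun h => hbar h.1, quotCoeff,
    if_pos ⟨hj, hv⟩, hD, pivot_of_mem_deltaJ a hj]
  linear_combination (f (e j + γ) - tailTerms e a (quotCoeff e Ω D) (e j + γ)) *
    Ring.inverse_mul_cancel _ (hunit j)

variable (l lt0 e)

theorem exists_division_of_zWeight_le (hwf : WellFounded lt0)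
    (hadd : ∀ a b c : Expo n q, lt0 a b → lt0 (a + c) (b + c)) (P : Fin r → Rxz n q A)
    (hP : ∀ j, ∀ d ∈ newtonDiag (P j), d = e j ∨ PrecL l lt0 d (e j))
    (hunit : ∀ j, IsUnit (coeffOf (P j) (e j))) {M : ℕ} (hM : 0 < M)
    (hPM : ∀ j, ∀ δ ∈ newtonDiag (P j), degSum δ.2 < M) {B : ℕ} (F : Rxz n q A)
    (hFB : ∀ v ∈ newtonDiag F, zWeight l M v.2 ≤ B) :
    ∃ (Qs : Fin r → Rxz n q A) (R : Rxz n q A), F = ∑ j, Qs j * P j + R ∧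
      (∀ j, ∀ d ∈ newtonDiag (Qs j), d + e j ∈ DeltaJ e j) ∧ newtonDiag R ⊆ DeltaBar e := by
  set Ω : Set (Expo n q) := {w | zWeight l M w.2 ≤ B}
  have hΩ : ∀ j (x : Expo n q × Expo n q), coeffOf (P j) x.2 ≠ 0 →
      PrecL l lt0 x.2 (e j) → x.1 + x.2 ∉ Ω → e j + x.1 ∉ Ω := by
    intro j x hx hprec hout hin
    have := zWeight_le_of_precL (hPM j x.2 hx) hprec
    simp only [Ω, Set.mem_ofPred_eq, Prod.snd_add, zWeight_add] at hout hin
    omega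
  obtain ⟨D, hD⟩ := exists_divisionCoeff (Ω := Ω) hadd
    (wellFounded_bounded_flip_precL l lt0 hM hwf B) hP (coeffOf F)
  have hfin : {β : Fin q →₀ ℕ | degSum β ≤ B}.Finite :=
    (Finsupp.finite_of_degree_le B).subset fun β hβ => by
      rwa [Set.mem_ofPred_eq, Finsupp.degree_eq_sum]
  have hQs : ∀ j, ∃ Qj : Rxz n q A, ∀ d, coeffOf Qj d = quotCoeff e Ω D j d := fun j =>
    exists_coeffOf_eq _ hfin fun d hd => by
      have hw : zWeight l M (e j + d).2 ≤ B := (mem_of_quotCoeff_ne_zero hd).2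
      rw [Prod.snd_add, zWeight_add] at hw
      exact (degSum_le_zWeight l M d.2).trans (by omega)
  choose Qs hQs using hQs
  obtain ⟨R, hR⟩ := exists_coeffOf_eq (remCoeff e Ω D) hfin fun d hd =>
    (degSum_le_zWeight l M d.2).trans (mem_of_remCoeff_ne_zero hd).2
  refine ⟨Qs, R, Rxz.ext fun v => ?_, fun j d hd => ?_, fun v hv => ?_⟩
  · rw [coeffOf_add, coeffOf_sum_mul, hR]
    simp only [hQs]
    rw [← leadTerms_add_tailTerms e (fun j => coeffOf (P j))]
    exact (divisionCoeff_spec hP hunit hΩ (fun v hv => of_not_not (mt (hFB v) hv)) hD v).symm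
  · rw [add_comm]
    exact (mem_of_quotCoeff_ne_zero fun h0 => hd ((hQs j d).trans h0)).1
  · exact (mem_of_remCoeff_ne_zero fun h0 => hv ((hR v).trans h0)).1

theorem exists_division (hwf : WellFounded lt0)
    (hadd : ∀ a b c : Expo n q, lt0 a b → lt0 (a + c) (b + c)) (P : Fin r → Rxz n q A)
    (hP : ∀ j, ∀ d ∈ newtonDiag (P j), d = e j ∨ PrecL l lt0 d (e j))
    (hunit : ∀ j, IsUnit (coeffOf (P j) (e j))) (F : Rxz n q A) :
    ∃ (Qs : Fin r → Rxz n q A) (R : Rxz n q A), F = ∑ j, Qs j * P j + R ∧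
      (∀ j, ∀ d ∈ newtonDiag (Qs j), d + e j ∈ DeltaJ e j) ∧ newtonDiag R ⊆ DeltaBar e :=
  exists_division_of_zWeight_le l lt0 e hwf hadd P hP hunit (Nat.succ_pos _)
    (fun j _ hδ => Nat.lt_succ_of_le <| (Finset.le_sup (mem_support_of_mem_newtonDiag hδ)).trans
      (Finset.le_sup (f := fun j => (P j).support.sup degSum) (mem_univ j))) F
    (fun _ hv => Finset.le_sup (f := zWeight l _) (mem_support_of_mem_newtonDiag hv))

end Existence

section Uniqueness
variable {n q r : ℕ} {l : Fin q → ℕ} {lt0 : Expo n q → Expo n q → Prop} {K : Type} [CommRing K]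
  {S : Subring K} {I : Submodule S K} {e : Fin r → Expo n q} {P Z : Fin r → Rxz n q K}

lemma Submodule.mul_mem_of_mem_subring {s x : K} (hs : s ∈ S) (hx : x ∈ I) : s * x ∈ I := by
  simpa only [Subring.smul_def, smul_eq_mul] using I.smul_mem ⟨s, hs⟩ hx

lemma tailTerms_mem (hadd : ∀ a b c : Expo n q, lt0 a b → lt0 (a + c) (b + c))
    (hPS : ∀ j d, coeffOf (P j) d ∈ S)
    (hPI : ∀ j d, ¬(d = e j ∨ PrecL l lt0 d (e j)) → coeffOf (P j) d ∈ I)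
    (hZS : ∀ j d, coeffOf (Z j) d ∈ S) {v : Expo n q}
    (hZI : ∀ j γ, PrecL l lt0 v (e j + γ) → coeffOf (Z j) γ ∈ I) :
    tailTerms e (fun j => coeffOf (P j)) (fun j => coeffOf (Z j)) v ∈ I := by
  refine Submodule.sum_mem _ fun j _ => Submodule.sum_mem _ fun x hx => ?_
  split_ifs with hxe
  · exact zero_mem _
  by_cases hprec : PrecL l lt0 x.2 (e j)
  · have hv := precL_add_right hadd hprec x.1
    rw [add_comm, HasAntidiagonal.mem_antidiagonal.mp hx] at hv
    rw [mul_comm]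
    exact I.mul_mem_of_mem_subring (hPS j x.2) (hZI j x.1 hv)
  · exact I.mul_mem_of_mem_subring (hZS j x.1) (hPI j x.2 (not_or.mpr ⟨hxe, hprec⟩))

variable (l lt0)

theorem division_unique_modulo (hwf : WellFounded lt0)
    (hadd : ∀ a b c : Expo n q, lt0 a b → lt0 (a + c) (b + c))
    (hPS : ∀ j d, coeffOf (P j) d ∈ S)
    (hPI : ∀ j d, ¬(d = e j ∨ PrecL l lt0 d (e j)) → coeffOf (P j) d ∈ I)
    (hcancel : ∀ j x, x * coeffOf (P j) (e j) ∈ I → x ∈ I)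
    (hZS : ∀ j d, coeffOf (Z j) d ∈ S) (hZ : ∀ j, ∀ d ∈ newtonDiag (Z j), d + e j ∈ DeltaJ e j)
    {ρ τ : Rxz n q K} (hρ : newtonDiag ρ ⊆ DeltaBar e) (hτ : ∀ d, coeffOf τ d ∈ I)
    (heq : ∑ j, Z j * P j + ρ + τ = 0) :
    (∀ j d, coeffOf (Z j) d ∈ I) ∧ ∀ d, coeffOf ρ d ∈ I := by
  set B := univ.sup fun j => zWeight l 1 (e j).2 + (Z j).support.sup (zWeight l 1)
  have hZB : ∀ j γ, coeffOf (Z j) γ ≠ 0 → zWeight l 1 (e j + γ).2 ≤ B := fun j γ hγ => by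
    rw [Prod.snd_add, zWeight_add]
    exact (Nat.add_le_add_left (Finset.le_sup (mem_support_of_mem_newtonDiag hγ)) _).trans
      (Finset.le_sup (f := fun j => zWeight l 1 (e j).2 + (Z j).support.sup (zWeight l 1))
        (mem_univ j))
  have hZ0 : ∀ j γ, e j + γ ∉ DeltaJ e j → coeffOf (Z j) γ = 0 := fun j γ h =>
    by_contra fun h0 => h (add_comm γ (e j) ▸ hZ j γ h0)
  have hρ0 : ∀ v ∉ DeltaBar e, coeffOf ρ v = 0 := fun v h => by_contra fun h0 => h (hρ h0)
  suffices h : ∀ v, (∀ j γ, e j + γ = v → coeffOf (Z j) γ ∈ I) ∧ coeffOf ρ v ∈ I from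
    ⟨fun j γ => (h _).1 j γ rfl, fun v => (h v).2⟩
  intro v
  induction v using (wellFounded_bounded_flip_precL l lt0 one_pos hwf B).induction with
  | _ v IH =>
  have htail := tailTerms_mem hadd hPS hPI hZS (v := v) fun j γ hprec => by
    by_cases hw : zWeight l 1 (e j + γ).2 ≤ B
    · exact (IH _ ⟨hw, hprec⟩).1 j γ rfl
    · rw [of_not_not (mt (hZB j γ) hw)]
      exact zero_mem _
  have hlead : leadTerms e (fun j => coeffOf (P j)) (fun j => coeffOf (Z j)) v + coeffOf ρ v
      ∈ I := by
    have hv := congrArg (coeffOf · v) heq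
    simp only [coeffOf_add, coeffOf_sum_mul, coeffOf_zero] at hv
    rw [show leadTerms e _ _ v + coeffOf ρ v = -(tailTerms e (fun j => coeffOf (P j))
        (fun j => coeffOf (Z j)) v + coeffOf τ v) by
      linear_combination hv + leadTerms_add_tailTerms e _ (fun j => coeffOf (Z j)) v]
    exact neg_mem (add_mem htail (hτ v))
  refine ⟨?_, ?_⟩
  · rintro j γ rfl
    by_cases hj : e j + γ ∈ DeltaJ e j
    · rw [leadTerms_of_mem_deltaJ hZ0 hj, hρ0 _ (not_mem_deltaBar_of_mem_deltaJ e hj),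
        add_zero] at hlead
      exact hcancel j _ hlead
    · rw [hZ0 j γ hj]
      exact zero_mem _
  · by_cases hv : v ∈ DeltaBar e
    · rwa [leadTerms_of_mem_deltaBar hv, zero_add] at hlead
    · rw [hρ0 v hv]
      exact zero_mem _

end Uniqueness

section Localization
variable {C : Type} [CommRing C] (h : C) (Q : Ideal C)

def locSubring : Subring (FractionRing C) where
  carrier := {a | inLoc h a}
  mul_mem' := by
    rintro x y ⟨c, m, hc⟩ ⟨d, k, hd⟩
    exact ⟨c * d, m + k, by rw [map_mul, ← hc, ← hd, pow_add]; ring⟩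
  one_mem' := ⟨1, 0, by simp⟩
  add_mem' := by
    rintro x y ⟨c, m, hc⟩ ⟨d, k, hd⟩
    exact ⟨c * h ^ k + d * h ^ m, m + k, by
      rw [map_add, map_mul, map_mul, map_pow, map_pow, ← hc, ← hd, pow_add]; ring⟩
  zero_mem' := ⟨0, 0, by simp⟩
  neg_mem' := by
    rintro x ⟨c, m, hc⟩
    exact ⟨-c, m, by rw [map_neg, ← hc]; ring⟩

def locIdeal : Submodule (locSubring h) (FractionRing C) where
  carrier := {a | inLocIdeal h Q a}
  add_mem' := by
    rintro x y ⟨c, hc, m, hcm⟩ ⟨d, hd, k, hdk⟩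
    refine ⟨c * h ^ k + d * h ^ m, Q.add_mem (Q.mul_mem_right _ hc) (Q.mul_mem_right _ hd),
      m + k, ?_⟩
    rw [map_add, map_mul, map_mul, map_pow, map_pow, ← hcm, ← hdk, pow_add]
    ring
  zero_mem' := ⟨0, Q.zero_mem, 0, by simp⟩
  smul_mem' := by
    rintro ⟨s, hs⟩ x ⟨d, hd, k, hdk⟩
    obtain ⟨c, m, hc⟩ := id hs
    refine ⟨c * d, Q.mul_mem_left _ hd, m + k, ?_⟩
    change s * x * _ = _
    rw [map_mul, ← hc, ← hdk, pow_add]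
    ring

lemma algebraMap_mem_locSubring (c : C) : algebraMap C (FractionRing C) c ∈ locSubring h :=
  ⟨c, 0, by simp⟩

variable {h Q}

lemma algebraMap_mem_locIdeal {c : C} (hc : c ∈ Q) :
    algebraMap C (FractionRing C) c ∈ locIdeal h Q :=
  ⟨c, hc, 0, by simp⟩

lemma mem_locSubring_of_mem_locIdeal {x : FractionRing C} (hx : x ∈ locIdeal h Q) :
    x ∈ locSubring h :=
  let ⟨c, _, m, hc⟩ := hx
  ⟨c, m, hc⟩

lemma mem_locIdeal_of_mul_mem {c : C} (hc : c ∣ h) {x : FractionRing C}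
    (hx : x * algebraMap C (FractionRing C) c ∈ locIdeal h Q) : x ∈ locIdeal h Q := by
  obtain ⟨g, rfl⟩ := hc
  obtain ⟨d, hd, m, hdm⟩ := hx
  refine ⟨d * g, Q.mul_mem_right g hd, m + 1, ?_⟩
  simp only [map_mul] at hdm ⊢
  linear_combination (algebraMap C (FractionRing C) g) * hdm

variable (h) in
def toLoc : C →+* locSubring h :=
  (algebraMap C (FractionRing C)).codRestrict (locSubring h) (algebraMap_mem_locSubring h)

lemma isUnit_toLoc [IsDomain C] (hh : h ≠ 0) {c : C} (hc : c ∣ h) : IsUnit (toLoc h c) := by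
  have hh' : algebraMap C (FractionRing C) h ≠ 0 :=
    (map_ne_zero_iff _ (IsFractionRing.injective C _)).mpr hh
  refine isUnit_of_dvd_unit (map_dvd _ hc) (isUnit_iff_exists_inv.mpr
    ⟨⟨(algebraMap C _ h)⁻¹, 1, 1, ?_⟩, Subtype.ext (mul_inv_cancel₀ hh')⟩)
  rw [pow_one, inv_mul_cancel₀ hh', map_one]

end Localization

section DivisionModQ
variable {n q r : ℕ} {C : Type} [CommRing C] {Q : Ideal C} {l : Fin q → ℕ}
  {lt0 : Expo n q → Expo n q → Prop} {e : Fin r → Expo n q} {P : Fin r → Rxz n q C} {h : C}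

lemma coeffOf_toFracHom (F : Rxz n q C) (d : Expo n q) :
    coeffOf (toFracHom F) d = algebraMap C (FractionRing C) (coeffOf F d) :=
  coeffOf_mapRxz _ F d

lemma coeffOf_specHom_eq_zero_iff (F : Rxz n q C) (d : Expo n q) :
    coeffOf (specHom Q F) d = 0 ↔ coeffOf F d ∈ Q := by
  rw [specHom, ← mapRxz, coeffOf_mapRxz, RingHom.comp_apply,
    map_eq_zero_iff _ (IsFractionRing.injective _ _), Ideal.Quotient.eq_zero_iff_mem]

lemma coeffOf_mem_of_isPrivExp {prec : Expo n q → Expo n q → Prop}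
    {F : Rxz n q C} {e : Expo n q} (he : IsPrivExp prec (specHom Q F) e) {d : Expo n q}
    (hd : ¬(d = e ∨ prec d e)) : coeffOf F d ∈ Q :=
  (coeffOf_specHom_eq_zero_iff F d).mp (of_not_not fun h0 => hd (he.2 d h0))

lemma coeffOf_not_mem_of_isPrivExp {prec : Expo n q → Expo n q → Prop}
    {F : Rxz n q C} {e : Expo n q} (he : IsPrivExp prec (specHom Q F) e) : coeffOf F e ∉ Q :=
  fun h0 => he.1 ((coeffOf_specHom_eq_zero_iff F e).mpr h0)

lemma newtonDiag_mapRxz {A B : Type} [CommRing A] [CommRing B] {φ : A →+* B}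
    (hφ : Function.Injective φ) (F : Rxz n q A) : newtonDiag (mapRxz φ F) = newtonDiag F := by
  ext d
  simp only [newtonDiag, Set.mem_ofPred_eq, coeffOf_mapRxz, map_ne_zero_iff _ hφ]

lemma coeffOf_eq_zero_of_eq_zero_or {A : Type} [CommRing A] {p : Expo n q → Prop}
    {F : Rxz n q A} (hF : F = 0 ∨ ∀ d ∈ newtonDiag F, p d) {d : Expo n q} (hd : ¬ p d) :
    coeffOf F d = 0 := by
  rcases hF with rfl | hF
  · exact coeffOf_zero d
  · exact of_not_not fun h0 => hd (hF d h0)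

lemma forall_newtonDiag_sub {A : Type} [CommRing A] {p : Expo n q → Prop} {F F' : Rxz n q A}
    (hF : F = 0 ∨ ∀ d ∈ newtonDiag F, p d) (hF' : F' = 0 ∨ ∀ d ∈ newtonDiag F', p d) :
    ∀ d ∈ newtonDiag (F - F'), p d := fun d hd => of_not_not fun hp => hd <| by
  rw [coeffOf_sub, coeffOf_eq_zero_of_eq_zero_or hF hp, coeffOf_eq_zero_of_eq_zero_or hF' hp,
    sub_zero]

variable (l lt0)

lemma exists_isDivModQ [IsDomain C] (hwf : WellFounded lt0)
    (hadd : ∀ a b c : Expo n q, lt0 a b → lt0 (a + c) (b + c))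
    (hPQ : ∀ j d, ¬(d = e j ∨ PrecL l lt0 d (e j)) → coeffOf (P j) d ∈ Q)
    (hh : h ≠ 0) (hdvd : ∀ j, coeffOf (P j) (e j) ∣ h) (F : Rxz n q C) :
    ∃ Qs R T, IsDivModQ Q h P e F Qs R T := by
  set σ := (locSubring h).subtype
  have htrunc : ∀ j, ∃ P' : Rxz n q (locSubring h), ∀ d, coeffOf P' d =
      if d = e j ∨ PrecL l lt0 d (e j) then toLoc h (coeffOf (P j) d) else 0 := fun j =>
    exists_coeffOf_eq _ (P j).support.finite_toSet fun d hd =>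
      mem_support_of_mem_newtonDiag fun h0 => hd (by simp [h0])
  choose P' hP' using htrunc
  obtain ⟨Qs, R, hdiv, hQs, hR⟩ := exists_division l lt0 e hwf hadd P'
    (fun j d hd => of_not_not fun hn => hd (by rw [hP', if_neg hn]))
    (fun j => by rw [hP', if_pos (Or.inl rfl)]; exact isUnit_toLoc hh (hdvd j)) (mapRxz (toLoc h) F)
  have hT : ∀ d, coeffOf (toFracHom F - ∑ j, mapRxz σ (Qs j) * toFracHom (P j) - mapRxz σ R) d
      ∈ locIdeal h Q := by
    have hF : toFracHom F = mapRxz σ (mapRxz (toLoc h) F) := Rxz.ext fun d => by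
      simp only [coeffOf_toFracHom, coeffOf_mapRxz]; rfl
    rw [hF, hdiv, map_add, map_sum]
    intro d
    rw [show ∀ X Y Z : Rxz n q (FractionRing C), X + Y - Z - Y = X - Z by intros; ring]
    simp only [map_mul, ← Finset.sum_sub_distrib, ← mul_sub]
    rw [coeffOf_sum_mul]
    refine Submodule.sum_mem _ fun j _ => Submodule.sum_mem _ fun x _ =>
      (locIdeal h Q).mul_mem_of_mem_subring (by simp [σ]) ?_
    rw [coeffOf_sub, coeffOf_mapRxz, hP', coeffOf_toFracHom]
    split_ifs with hx
    · convert zero_mem (locIdeal h Q)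
      exact sub_self _
    · rw [map_zero, zero_sub]
      exact neg_mem (algebraMap_mem_locIdeal (hPQ j x.2 hx))
  refine ⟨fun j => mapRxz σ (Qs j), mapRxz σ R, _, by ring, fun j d => ?_, fun d => ?_,
    fun d => mem_locSubring_of_mem_locIdeal (hT d), hT, fun j => Or.inr ?_, Or.inr ?_⟩
  · rw [coeffOf_mapRxz]
    exact (coeffOf (Qs j) d).2
  · rw [coeffOf_mapRxz]
    exact (coeffOf R d).2
  · rw [newtonDiag_mapRxz Subtype.val_injective]
    exact hQs j
  · rw [newtonDiag_mapRxz Subtype.val_injective]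
    exact hR

lemma isDivModQ_unique (hwf : WellFounded lt0)
    (hadd : ∀ a b c : Expo n q, lt0 a b → lt0 (a + c) (b + c))
    (hPQ : ∀ j d, ¬(d = e j ∨ PrecL l lt0 d (e j)) → coeffOf (P j) d ∈ Q)
    (hdvd : ∀ j, coeffOf (P j) (e j) ∣ h) {F : Rxz n q C}
    {Qs Qs' : Fin r → Rxz n q (FractionRing C)} {R R' T T' : Rxz n q (FractionRing C)}
    (hsol : IsDivModQ Q h P e F Qs R T) (hsol' : IsDivModQ Q h P e F Qs' R' T') :
    (∀ j d, inLocIdeal h Q (coeffOf (Qs j - Qs' j) d)) ∧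
      ∀ d, inLocIdeal h Q (coeffOf (R - R') d) := by
  obtain ⟨heq, hQsS, -, -, hTI, hQsΔ, hRΔ⟩ := hsol
  obtain ⟨heq', hQsS', -, -, hTI', hQsΔ', hRΔ'⟩ := hsol'
  refine division_unique_modulo l lt0 (S := locSubring h) (I := locIdeal h Q)
    (P := fun j => toFracHom (P j)) (τ := T - T') hwf hadd
    (fun j d => by rw [coeffOf_toFracHom]; exact algebraMap_mem_locSubring h _)
    (fun j d hd => by rw [coeffOf_toFracHom]; exact algebraMap_mem_locIdeal (hPQ j d hd))
    (fun j x hx => mem_locIdeal_of_mul_mem (hdvd j) (by rwa [coeffOf_toFracHom] at hx))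
    (fun j d => by rw [coeffOf_sub]; exact sub_mem (hQsS j d) (hQsS' j d))
    (fun j => forall_newtonDiag_sub (hQsΔ j) (hQsΔ' j)) (forall_newtonDiag_sub hRΔ hRΔ')
    (fun d => by rw [coeffOf_sub]; exact sub_mem (hTI d) (hTI' d)) ?_
  simp only [sub_mul, Finset.sum_sub_distrib]
  linear_combination heq' - heq

end DivisionModQ

theorem division_mod_Q_general
    (n q : ℕ)
    (C : Type) [CommRing C] [IsDomain C]
    (Q : Ideal C) (hQ : Q.IsPrime)
    (l : Fin q → ℕ)
    (lt0 : Expo n q → Expo n q → Prop)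
    (hlt0_wf : WellFounded lt0)
    (hlt0_add : ∀ a b c : Expo n q, lt0 a b → lt0 (a + c) (b + c))
    (r : ℕ) (P : Fin r → Rxz n q C)
    (e : Fin r → Expo n q)
    (he : ∀ j, IsPrivExp (PrecL l lt0) (specHom Q (P j)) (e j))
    (h : C) (hh : h = ∏ j, coeffOf (P j) (e j))
    (F : Rxz n q C) :
    h ∉ Q ∧
    ∃ (Qs : Fin r → Rxz n q (FractionRing C)) (R T : Rxz n q (FractionRing C)),
      IsDivModQ Q h P e F Qs R T ∧
      ∀ (Qs' : Fin r → Rxz n q (FractionRing C)) (R' T' : Rxz n q (FractionRing C)),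
        IsDivModQ Q h P e F Qs' R' T' →
        (∀ j d, inLocIdeal h Q (coeffOf (Qs j - Qs' j) d)) ∧
        (∀ d, inLocIdeal h Q (coeffOf (R - R') d)) := by
  have hPQ : ∀ j d, ¬(d = e j ∨ PrecL l lt0 d (e j)) → coeffOf (P j) d ∈ Q := fun j _ =>
    coeffOf_mem_of_isPrivExp (he j)
  have hhQ : h ∉ Q := by
    rw [hh, hQ.prod_mem_iff]
    rintro ⟨j, -, hj⟩
    exact coeffOf_not_mem_of_isPrivExp (he j) hj
  have hdvd : ∀ j, coeffOf (P j) (e j) ∣ h := fun j => hh ▸ Finset.dvd_prod_of_mem _ (mem_univ j)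
  obtain ⟨Qs, R, T, hsol⟩ :=
    exists_isDivModQ l lt0 hlt0_wf hlt0_add hPQ (ne_of_mem_of_not_mem Q.zero_mem hhQ).symm hdvd F
  exact ⟨hhQ, Qs, R, T, hsol, fun Qs' R' T' hsol' =>
    isDivModQ_unique l lt0 hlt0_wf hlt0_add hPQ hdvd hsol hsol'⟩

/-- Division modulo Q (commutative case of Proposition 3.5): existence, with denominators
only powers of h = ∏_j cp^modQ_≺(P_j) ∈ C \ Q, and uniqueness of (Q_1, …, Q_r, R) modulo
elements with all coefficients in Q·C[h⁻¹]. -/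
theorem division_mod_Q
    (n q : ℕ) (hn : 0 < n) (hq : 0 < q)
    (C : Type) [CommRing C] [IsDomain C] [Algebra ℚ C]
    (Q : Ideal C) (hQ : Q.IsPrime)
    (l : Fin q → ℕ)
    (lt0 : Expo n q → Expo n q → Prop)
    (hlt0_tri : ∀ a b : Expo n q, lt0 a b ∨ a = b ∨ lt0 b a)
    (hlt0_trans : ∀ a b c : Expo n q, lt0 a b → lt0 b c → lt0 a c)
    (hlt0_wf : WellFounded lt0)
    (hlt0_add : ∀ a b c : Expo n q, lt0 a b → lt0 (a + c) (b + c))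
    (r : ℕ) (P : Fin r → Rxz n q C) (hP : ∀ j, ¬ allCoeffIn Q (P j))
    (e : Fin r → Expo n q)
    (he : ∀ j, IsPrivExp (PrecL l lt0) (specHom Q (P j)) (e j))
    (h : C) (hh : h = ∏ j, coeffOf (P j) (e j))
    (F : Rxz n q C) :
    h ∉ Q ∧
    ∃ (Qs : Fin r → Rxz n q (FractionRing C)) (R T : Rxz n q (FractionRing C)),
      IsDivModQ Q h P e F Qs R T ∧
      ∀ (Qs' : Fin r → Rxz n q (FractionRing C)) (R' T' : Rxz n q (FractionRing C)),
        IsDivModQ Q h P e F Qs' R' T' →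
        (∀ j d, inLocIdeal h Q (coeffOf (Qs j - Qs' j) d)) ∧
        (∀ d, inLocIdeal h Q (coeffOf (R - R') d)) :=
  division_mod_Q_general n q C Q hQ l lt0 hlt0_wf hlt0_add r P e he h hh F

end
end

section
/- Well-definedness and bounds for the exponents l_i in the formal Oaku algorithm. Let J be an ideal of k[[x]][s] with J ∩ k[s] ≠ (0) and monic generator b ∈ k[s]; let J̄ be the ideal of k̄[[x]][s] generated by the image of J, b₀ ∈ k̄[s] the monic generator of {g(0,s) : g ∈ J̄}, and s_1,…,s_m the distinct roots of b₀ in k̄. Then: (i) b₀ divides b in k̄[s]; (ii) for each i = 1,…,m, the set {l ∈ ℕ : ∃ h ∈ k̄[[x]][s], h·(s−s_i)^l ∈ J̄ and h(0,s_i) ≠ 0} is nonempty; (iii) its minimum l_i satisfies μ_i ≤ l_i ≤ ν_i, where μ_i and ν_i denote the multiplicities of s_i as a root of b₀ and of b respectively. -/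
/-
The polynomial `b` lies in `J`, so `b(0, s)` lies in the ideal of constant terms of `J̄`, which
gives `b₀ ∣ b`. Writing `b = (s - sᵢ)^νᵢ · q` with `q(sᵢ) ≠ 0` exhibits `νᵢ` as an admissible
exponent, so the set of exponents is nonempty with minimum at most `νᵢ`. Conversely, if
`h · (s - sᵢ)^l ∈ J̄` with `h(0, sᵢ) ≠ 0`, then `b₀` divides `h(0, s) · (s - sᵢ)^l`, whose
multiplicity at `sᵢ` is exactly `l`; hence `μᵢ ≤ l`.
-/

open Classical Polynomial

noncomputable section

/-- The ring A[[x]][s], polynomials in one variable s over A[[x]]. -/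
abbrev RS (n : ℕ) (A : Type) [CommRing A] := Polynomial (MvPowerSeries (Fin n) A)

/-- The inclusion A[s] → A[[x]][s], applied coefficientwise. -/
def toRS (n : ℕ) (A : Type) [CommRing A] : Polynomial A →+* RS n A :=
  Polynomial.mapRingHom (MvPowerSeries.C (σ := Fin n) (R := A))

/-- The evaluation g ↦ g(0, s) : A[[x]][s] → A[s], applying the constant-term map
A[[x]] → A to each coefficient. -/
def evAtZero (n : ℕ) (A : Type) [CommRing A] : RS n A →+* Polynomial A :=
  Polynomial.mapRingHom (MvPowerSeries.constantCoeff (σ := Fin n) (R := A))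

/-- Coefficientwise extension of scalars A[[x]][s] → B[[x]][s] along a ring map A → B. -/
def extScalars (n : ℕ) {A B : Type} [CommRing A] [CommRing B] (f : A →+* B) :
    RS n A →+* RS n B :=
  Polynomial.mapRingHom (MvPowerSeries.map (σ := Fin n) f)

theorem Polynomial.rootMultiplicity_le_of_dvd_mul_X_sub_C_pow {R : Type*} [CommRing R]
    {p g : R[X]} {a : R} {l : ℕ} (hg : g.eval a ≠ 0) (hdvd : p ∣ g * (X - C a) ^ l) :
    p.rootMultiplicity a ≤ l := by
  have hg0 : g ≠ 0 := by
    rintro rfl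
    exact hg eval_zero
  have : Nontrivial R := Nontrivial.of_polynomial_ne hg0
  calc p.rootMultiplicity a
      ≤ (g * (X - C a) ^ l).rootMultiplicity a :=
        rootMultiplicity_le_rootMultiplicity_of_dvd
          (((monic_X_sub_C a).pow l).mul_left_ne_zero hg0) hdvd a
    _ = l := by rw [rootMultiplicity_mul_X_sub_C_pow hg0, rootMultiplicity_eq_zero hg, zero_add]

section

variable (n : ℕ) {A : Type} [CommRing A]

theorem extScalars_toRS {B : Type} [CommRing B] (f : A →+* B) (p : A[X]) :
    extScalars n f (toRS n A p) = toRS n B (p.map f) := by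
  simp only [extScalars, toRS, coe_mapRingHom, Polynomial.map_map]
  congr 1
  ext a : 1
  simp [MvPowerSeries.map_C]

theorem evAtZero_toRS (p : A[X]) : evAtZero n A (toRS n A p) = p := by
  have hsection : (MvPowerSeries.constantCoeff (σ := Fin n) (R := A)).comp MvPowerSeries.C =
      RingHom.id A := by
    ext a
    simp
  simp only [evAtZero, toRS, coe_mapRingHom, Polynomial.map_map, hsection, Polynomial.map_id]

theorem toRS_X_sub_C (a : A) : toRS n A (X - C a) = X - C (MvPowerSeries.C a) := by
  simp [toRS]

theorem evAtZero_X_sub_C (a : A) : evAtZero n A (X - C (MvPowerSeries.C a)) = X - C a := by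
  simp [evAtZero]

def admissibleExponents (I : Ideal (RS n A)) (s : A) : Set ℕ :=
  {l | ∃ h : RS n A, h * (X - C (MvPowerSeries.C s)) ^ l ∈ I ∧ (evAtZero n A h).eval s ≠ 0}

variable {n} {I : Ideal (RS n A)} {b₀ : A[X]}

theorem dvd_of_toRS_mem (hI : Ideal.map (evAtZero n A) I ≤ Ideal.span {b₀}) {p : A[X]}
    (hp : toRS n A p ∈ I) : b₀ ∣ p := by
  rw [← Ideal.mem_span_singleton, ← evAtZero_toRS n p]
  exact hI (Ideal.mem_map_of_mem _ hp)

theorem rootMultiplicity_mem_admissibleExponents {p : A[X]} (hp : toRS n A p ∈ I) (hp0 : p ≠ 0)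
    (s : A) : p.rootMultiplicity s ∈ admissibleExponents n I s := by
  refine ⟨toRS n A (p /ₘ (X - C s) ^ p.rootMultiplicity s), ?_, ?_⟩
  · rwa [← toRS_X_sub_C, ← map_pow, ← map_mul, mul_comm, pow_mul_divByMonic_rootMultiplicity_eq]
  · rw [evAtZero_toRS]
    exact eval_divByMonic_pow_rootMultiplicity_ne_zero s hp0

theorem rootMultiplicity_le_of_mem_admissibleExponents
    (hI : Ideal.map (evAtZero n A) I ≤ Ideal.span {b₀}) {s : A} {l : ℕ}
    (hl : l ∈ admissibleExponents n I s) : b₀.rootMultiplicity s ≤ l := by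
  obtain ⟨h, hmem, hev⟩ := hl
  refine rootMultiplicity_le_of_dvd_mul_X_sub_C_pow hev ?_
  rw [← Ideal.mem_span_singleton, ← evAtZero_X_sub_C n, ← map_pow, ← map_mul]
  exact hI (Ideal.mem_map_of_mem _ hmem)

theorem admissibleExponents_bounds (hI : Ideal.map (evAtZero n A) I ≤ Ideal.span {b₀})
    {p : A[X]} (hp : toRS n A p ∈ I) (hp0 : p ≠ 0) (s : A) :
    (admissibleExponents n I s).Nonempty ∧
      b₀.rootMultiplicity s ≤ sInf (admissibleExponents n I s) ∧
      sInf (admissibleExponents n I s) ≤ p.rootMultiplicity s := by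
  have hν := rootMultiplicity_mem_admissibleExponents hp hp0 s
  exact ⟨⟨_, hν⟩,
    le_csInf ⟨_, hν⟩ fun _ hl => rootMultiplicity_le_of_mem_admissibleExponents hI hl,
    Nat.sInf_le hν⟩

end

theorem oaku_exponents_bounds_general
    (n : ℕ) (k : Type) [Field k]
    (J : Ideal (RS n k))
    (b : Polynomial k) (hbMonic : b.Monic)
    (hb : Ideal.comap (toRS n k) J = Ideal.span {b})
    (Jbar : Ideal (RS n (AlgebraicClosure k)))
    (hJbar : Jbar = Ideal.map (extScalars n (algebraMap k (AlgebraicClosure k))) J)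
    (b0 : Polynomial (AlgebraicClosure k))
    (hb0 : Ideal.map (evAtZero n (AlgebraicClosure k)) Jbar = Ideal.span {b0})
    (m : ℕ) (sm : Fin m → AlgebraicClosure k) :
    b0 ∣ Polynomial.map (algebraMap k (AlgebraicClosure k)) b ∧
    ∀ i : Fin m,
      ({l : ℕ | ∃ h : RS n (AlgebraicClosure k),
          h * (X - C (MvPowerSeries.C (σ := Fin n) (R := AlgebraicClosure k) (sm i))) ^ l ∈ Jbar ∧
          Polynomial.eval (sm i) (evAtZero n (AlgebraicClosure k) h) ≠ 0}).Nonempty ∧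
      b0.rootMultiplicity (sm i) ≤
        sInf {l : ℕ | ∃ h : RS n (AlgebraicClosure k),
          h * (X - C (MvPowerSeries.C (σ := Fin n) (R := AlgebraicClosure k) (sm i))) ^ l ∈ Jbar ∧
          Polynomial.eval (sm i) (evAtZero n (AlgebraicClosure k) h) ≠ 0} ∧
      sInf {l : ℕ | ∃ h : RS n (AlgebraicClosure k),
          h * (X - C (MvPowerSeries.C (σ := Fin n) (R := AlgebraicClosure k) (sm i))) ^ l ∈ Jbar ∧
          Polynomial.eval (sm i) (evAtZero n (AlgebraicClosure k) h) ≠ 0} ≤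
        (Polynomial.map (algebraMap k (AlgebraicClosure k)) b).rootMultiplicity (sm i) := by
  have hbJ : toRS n k b ∈ J := by
    rw [← Ideal.mem_comap, hb]
    exact Ideal.mem_span_singleton_self b
  have hbJbar : toRS n _ (b.map (algebraMap k (AlgebraicClosure k))) ∈ Jbar := by
    rw [hJbar, ← extScalars_toRS]
    exact Ideal.mem_map_of_mem _ hbJ
  have hb0J : Ideal.map (evAtZero n _) Jbar ≤ Ideal.span {b0} := hb0.le
  exact ⟨dvd_of_toRS_mem hb0J hbJbar, fun i =>
    admissibleExponents_bounds hb0J hbJbar (hbMonic.map _).ne_zero (sm i)⟩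

/-- Well-definedness and bounds for the exponents l_i in the formal Oaku algorithm:
(i) b₀ divides (the image of) b in k̄[s]; (ii) for every root s_i of b₀ the set of
admissible exponents l is nonempty; (iii) its minimum l_i satisfies μ_i ≤ l_i ≤ ν_i,
where μ_i, ν_i are the multiplicities of s_i in b₀ and in b respectively. -/
theorem oaku_exponents_bounds
    (n : ℕ) (hn : 0 < n) (k : Type) [Field k] [CharZero k]
    (J : Ideal (RS n k))
    (hJne : Ideal.comap (toRS n k) J ≠ ⊥)
    (b : Polynomial k) (hbMonic : b.Monic)
    (hb : Ideal.comap (toRS n k) J = Ideal.span {b})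
    (Jbar : Ideal (RS n (AlgebraicClosure k)))
    (hJbar : Jbar = Ideal.map (extScalars n (algebraMap k (AlgebraicClosure k))) J)
    (b0 : Polynomial (AlgebraicClosure k)) (hb0Monic : b0.Monic)
    (hb0 : Ideal.map (evAtZero n (AlgebraicClosure k)) Jbar = Ideal.span {b0})
    (m : ℕ) (sm : Fin m → AlgebraicClosure k) (hsm : Function.Injective sm)
    (hroots : ∀ c : AlgebraicClosure k, b0.IsRoot c ↔ ∃ i, sm i = c) :
    b0 ∣ Polynomial.map (algebraMap k (AlgebraicClosure k)) b ∧
    ∀ i : Fin m,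
      ({l : ℕ | ∃ h : RS n (AlgebraicClosure k),
          h * (X - C (MvPowerSeries.C (σ := Fin n) (R := AlgebraicClosure k) (sm i))) ^ l ∈ Jbar ∧
          Polynomial.eval (sm i) (evAtZero n (AlgebraicClosure k) h) ≠ 0}).Nonempty ∧
      b0.rootMultiplicity (sm i) ≤
        sInf {l : ℕ | ∃ h : RS n (AlgebraicClosure k),
          h * (X - C (MvPowerSeries.C (σ := Fin n) (R := AlgebraicClosure k) (sm i))) ^ l ∈ Jbar ∧
          Polynomial.eval (sm i) (evAtZero n (AlgebraicClosure k) h) ≠ 0} ∧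
      sInf {l : ℕ | ∃ h : RS n (AlgebraicClosure k),
          h * (X - C (MvPowerSeries.C (σ := Fin n) (R := AlgebraicClosure k) (sm i))) ^ l ∈ Jbar ∧
          Polynomial.eval (sm i) (evAtZero n (AlgebraicClosure k) h) ≠ 0} ≤
        (Polynomial.map (algebraMap k (AlgebraicClosure k)) b).rootMultiplicity (sm i) :=
  oaku_exponents_bounds_general n k J b hbMonic hb Jbar hJbar b0 hb0 m sm

end
end
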